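/- arXiv:1911.06548 — 3 statements merged into one kernel-verified Lean document; each statement's English description precedes it below -/
import Mathlib

section
/- A real sequence (p_n) is statistically convergent to ℓ if and only if there exists a set J = {α_1 < α_2 < ...} ⊆ ℕ with natural density δ(J) = 1 such that the subsequence (p_{α_j}) converges to ℓ in the usual sense. -/
open Filter

open scoped Classical in
/-- The sequence of partial densities of `P ⊆ ℕ`. -/
noncomputable def densSeq (P : Set ℕ) (n : ℕ) : ℝ :=
  (((Finset.range n).filter (fun k => k ∈ P)).card : ℝ) / n

/-- `P` has natural density `d`. -/
def HasDensity (P : Set ℕ) (d : ℝ) : Prop :=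
  Tendsto (densSeq P) atTop (nhds d)

/-- Statistical convergence of a real sequence to `l`. -/
def StatTendsto (x : ℕ → ℝ) (l : ℝ) : Prop :=
  ∀ ε : ℝ, 0 < ε → HasDensity {n | |x n - l| > ε} 0

/-!
For a statistically convergent sequence the sets `A k = {n | 1/(k+1) < |p n - l|}` increase with
`k` and have density zero. A diagonal argument glues them into one set `B` of density zero that
contains each `A k` up to finitely many elements: `B = ⋃ k, A k ∩ [φ k, ∞)`, where beyond `φ k` the
set `A k` has relative density below `1/(k+1)`. Along the complement of `B`, which has density one,
the sequence converges. Conversely, the exceptional set of such a subsequence lies, up to finitely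
many terms, in the complement of its index set, which has density zero.
-/

section densSeq

lemma densSeq_nonneg (P : Set ℕ) (n : ℕ) : 0 ≤ densSeq P n := by
  unfold densSeq; positivity

lemma densSeq_le_densSeq {S T : Set ℕ} {n : ℕ} (h : ∀ m < n, m ∈ S → m ∈ T) :
    densSeq S n ≤ densSeq T n := by
  unfold densSeq
  gcongr ((?_ : Finset ℕ).card : ℝ) / _
  intro m
  simp only [Finset.mem_filter, Finset.mem_range]
  exact fun hm => ⟨hm.1, h m hm.1 hm.2⟩

lemma densSeq_union_le (S T : Set ℕ) (n : ℕ) :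
    densSeq (S ∪ T) n ≤ densSeq S n + densSeq T n := by
  unfold densSeq
  rw [← add_div]
  gcongr
  exact_mod_cast (Finset.card_le_card (by
    intro m
    simp only [Finset.mem_filter, Finset.mem_union, Set.mem_union]
    tauto)).trans (Finset.card_union_le _ _)

lemma densSeq_compl (P : Set ℕ) {n : ℕ} (hn : n ≠ 0) :
    densSeq Pᶜ n = 1 - densSeq P n := by
  classical
  unfold densSeq
  have hcard := Finset.card_filter_add_card_filter_not (s := Finset.range n) (p := (· ∈ P))
  rw [Finset.card_range] at hcard
  rw [eq_sub_iff_add_eq, ← add_div, div_eq_one_iff_eq (by exact_mod_cast hn), add_comm]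
  convert congrArg (Nat.cast (R := ℝ)) hcard using 1
  push_cast
  congr!

lemma densSeq_Iio_le (N n : ℕ) : densSeq (Set.Iio N) n ≤ N / n := by
  unfold densSeq
  gcongr
  simpa using Finset.card_le_card (s := (Finset.range n).filter (· ∈ Set.Iio N))
    (t := Finset.range N) (fun m => by simp)

end densSeq

section HasDensity

variable {S T : Set ℕ}

lemma HasDensity.compl {d : ℝ} (h : HasDensity S d) : HasDensity Sᶜ (1 - d) :=
  (tendsto_const_nhds.sub h).congr' <| (eventually_ne_atTop 0).mono fun _ hn =>
    (densSeq_compl S hn).symm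

lemma HasDensity.mono_zero (hT : HasDensity T 0) (h : S ⊆ T) : HasDensity S 0 :=
  squeeze_zero (densSeq_nonneg S) (fun _ => densSeq_le_densSeq fun _ _ hm => h hm) hT

lemma HasDensity.union_zero (hS : HasDensity S 0) (hT : HasDensity T 0) :
    HasDensity (S ∪ T) 0 :=
  squeeze_zero (densSeq_nonneg _) (densSeq_union_le S T) (by simpa using hS.add hT)

lemma hasDensity_Iio (N : ℕ) : HasDensity (Set.Iio N) 0 :=
  squeeze_zero (densSeq_nonneg _) (densSeq_Iio_le N)
    (tendsto_const_nhds.div_atTop tendsto_natCast_atTop_atTop)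

lemma Set.Finite.hasDensity_zero (hS : S.Finite) : HasDensity S 0 := by
  obtain ⟨N, hN⟩ := hS.bddAbove
  exact (hasDensity_Iio (N + 1)).mono_zero fun n hn => Nat.lt_succ_of_le (hN hn)

lemma HasDensity.infinite_of_one (h : HasDensity S 1) : S.Infinite := fun hS =>
  one_ne_zero (tendsto_nhds_unique h hS.hasDensity_zero)

end HasDensity

lemma exists_hasDensity_zero_eventually_subset {A : ℕ → Set ℕ} (hA : Monotone A)
    (h : ∀ k, HasDensity (A k) 0) :
    ∃ B : Set ℕ, HasDensity B 0 ∧ ∀ k, ∀ᶠ n in atTop, n ∈ A k → n ∈ B := by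
  obtain ⟨φ, hφ, hφA⟩ : ∃ φ : ℕ → ℕ, StrictMono φ ∧
      ∀ k, ∀ n ≥ φ k, densSeq (A k) n < 1 / (k + 1) :=
    extraction_forall_of_eventually fun k => eventually_forall_ge_atTop.2 <|
      (h k).eventually_lt_const (by positivity)
  -- `c n` is the last stage whose threshold has been passed by `n`
  set c : ℕ → ℕ := fun n => Nat.findGreatest (fun k => φ k ≤ n) n
  have le_c {k n : ℕ} (hkn : φ k ≤ n) : k ≤ c n :=
    Nat.le_findGreatest ((hφ.id_le k).trans hkn) hkn
  have φ_c_le {n : ℕ} (hn : φ 0 ≤ n) : φ (c n) ≤ n :=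
    Nat.findGreatest_spec (P := fun k => φ k ≤ n) (Nat.zero_le n) hn
  refine ⟨⋃ k, A k ∩ Set.Ici (φ k), ?_, fun k => ?_⟩
  · have hc : Tendsto c atTop atTop :=
      tendsto_atTop.2 fun k => eventually_atTop.2 ⟨φ k, fun _ => le_c⟩
    refine squeeze_zero' (Eventually.of_forall (densSeq_nonneg _)) ?_
      (tendsto_one_div_add_atTop_nhds_zero_nat.comp hc)
    filter_upwards [eventually_ge_atTop (φ 0)] with n hn
    refine (densSeq_le_densSeq fun m hmn hm => ?_).trans (hφA _ n (φ_c_le hn)).le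
    obtain ⟨j, hjA, hjm⟩ := Set.mem_iUnion.1 hm
    exact hA (le_c ((Set.mem_Ici.1 hjm).trans hmn.le)) hjA
  · filter_upwards [eventually_ge_atTop (φ k)] with n hn hnA
    exact Set.mem_iUnion.2 ⟨k, hnA, hn⟩

section Subsequence

variable {p : ℕ → ℝ} {l : ℝ}

theorem StatTendsto.exists_dense_subsequence (h : StatTendsto p l) :
    ∃ α : ℕ → ℕ, StrictMono α ∧ HasDensity (Set.range α) 1 ∧
      Tendsto (fun j => p (α j)) atTop (nhds l) := by
  have hA : Monotone fun k : ℕ => {n | 1 / ((k : ℝ) + 1) < |p n - l|} :=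
    fun _ _ hik => Set.ofPred_subset_ofPred.2 fun _ => (Nat.one_div_le_one_div hik).trans_lt
  obtain ⟨B, hB, hAB⟩ := exists_hasDensity_zero_eventually_subset hA fun k => h _ (by positivity)
  have hBc : HasDensity Bᶜ 1 := by simpa using hB.compl
  have hinf : (Set.ofPred (· ∈ Bᶜ)).Infinite := hBc.infinite_of_one
  refine ⟨Nat.nth (· ∈ Bᶜ), Nat.nth_strictMono hinf, ?_, ?_⟩
  · rwa [Nat.range_nth_of_infinite hinf]
  refine Metric.tendsto_nhds.2 fun ε hε => ?_
  obtain ⟨k, hk⟩ := exists_nat_one_div_lt hε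
  filter_upwards [(Nat.nth_strictMono hinf).tendsto_atTop.eventually (hAB k)] with j hj
  have hjB : Nat.nth (· ∈ Bᶜ) j ∉ B := Nat.nth_mem_of_infinite hinf j
  exact (not_lt.1 fun hjA => hjB (hj hjA)).trans_lt hk

theorem statTendsto_of_dense_subsequence {α : ℕ → ℕ} (hα : StrictMono α)
    (hdens : HasDensity (Set.range α) 1) (hconv : Tendsto (fun j => p (α j)) atTop (nhds l)) :
    StatTendsto p l := by
  intro ε hε
  obtain ⟨J, hJ⟩ := eventually_atTop.1 (Metric.tendsto_nhds.1 hconv ε hε)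
  have hc : HasDensity (Set.range α)ᶜ 0 := by simpa using hdens.compl
  refine (hc.union_zero (hasDensity_Iio (α J))).mono_zero fun n hn => ?_
  by_cases hr : n ∈ Set.range α
  · obtain ⟨j, rfl⟩ := hr
    exact Or.inr (hα (not_le.1 fun hj => (hJ j hj).not_gt (by rwa [Real.dist_eq])))
  · exact Or.inl hr

end Subsequence

theorem statTendsto_iff_dense_subsequence (p : ℕ → ℝ) (l : ℝ) :
    StatTendsto p l ↔
      ∃ α : ℕ → ℕ, StrictMono α ∧ HasDensity (Set.range α) 1 ∧
        Tendsto (fun j => p (α j)) atTop (nhds l) :=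
  ⟨StatTendsto.exists_dense_subsequence, fun ⟨_, hα, hdens, hconv⟩ =>
    statTendsto_of_dense_subsequence hα hdens hconv⟩
end

section
/- There exists a bounded linear functional F : l∞ → ℝ such that ‖F‖ = 1, F restricted to st equals the statistical limit functional g, F(s) ≥ 0 whenever s_n ≥ 0 for almost all n, and F(x) = F(Tx) for every map T : l∞ → l∞ satisfying (Tx)_k = x_{k+1} for almost all k. -/
open Filter

/-- The space `l∞` of bounded real sequences with sup norm. -/
noncomputable abbrev Linf := lp (fun _ : ℕ => ℝ) ⊤

/-- `F` is a Banach statistical limit functional on `l∞`. -/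
def IsBSL (F : Linf →L[ℝ] ℝ) : Prop :=
  ‖F‖ = 1 ∧
  (∀ (x : Linf) (l : ℝ), StatTendsto (fun n => x n) l → F x = l) ∧
  (∀ s : Linf, HasDensity {n | ¬ 0 ≤ s n} 0 → 0 ≤ F s) ∧
  (∀ T : Linf → Linf,
    (∀ x : Linf, HasDensity {k | T x k ≠ x (k + 1)} 0) → ∀ x : Linf, F x = F (T x))

open Topology

/-!
The functional `p x = limsup (Cesàro means of x)` is sublinear and bounded by `‖x‖`, so by
Hahn–Banach some linear `g` satisfies `g ≤ p`; applying this to `x` and `-x` shows `g x = l` as soon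
as the Cesàro means of `x` converge to `l`. A bounded sequence that is statistically convergent is
Cesàro convergent to the same limit, which gives the first property. For positivity, `-s` is
dominated by `max (-s) 0`, which vanishes off a set of density zero. For shift invariance,
`x k - T x k` is the sum of the telescoping sequence `x k - x (k + 1)`, whose Cesàro means are
`(x 0 - x n) / n`, and of `x (k + 1) - T x k`, which vanishes off a set of density zero.
-/

lemma hasDensity_zero_of_subset {P Q : Set ℕ} (hQP : Q ⊆ P) (hP : HasDensity P 0) :
    HasDensity Q 0 := by
  classical
  refine squeeze_zero (fun n => by unfold densSeq; positivity) (fun n => ?_) hP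
  unfold densSeq
  gcongr

lemma statTendsto_const (c : ℝ) : StatTendsto (fun _ => c) c := by
  intro ε hε
  have hempty : {n : ℕ | |c - c| > ε} = ∅ := by
    ext n
    simp [hε.le]
  have hzero : densSeq ∅ = 0 := by
    funext n
    simp [densSeq]
  rw [HasDensity, hempty, hzero]
  exact tendsto_const_nhds

lemma statTendsto_zero_of_hasDensity_support {x : ℕ → ℝ}
    (h : HasDensity (Function.support x) 0) : StatTendsto x 0 := by
  refine fun ε hε => hasDensity_zero_of_subset ?_ h
  intro k hk hxk
  simp only [Set.mem_ofPred_eq, hxk, sub_zero, abs_zero] at hk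
  linarith

noncomputable def cesaro (x : ℕ → ℝ) (n : ℕ) : ℝ := (∑ k ∈ Finset.range n, x k) / n

lemma cesaro_add (x y : ℕ → ℝ) : cesaro (x + y) = cesaro x + cesaro y := by
  funext n
  simp [cesaro, Finset.sum_add_distrib, add_div]

lemma cesaro_neg (x : ℕ → ℝ) : cesaro (-x) = -cesaro x := by
  funext n
  simp [cesaro, neg_div]

lemma cesaro_smul (c : ℝ) (x : ℕ → ℝ) : cesaro (c • x) = c • cesaro x := by
  funext n
  simp [cesaro, ← Finset.mul_sum, mul_div_assoc]

lemma cesaro_mono {x y : ℕ → ℝ} (h : x ≤ y) : cesaro x ≤ cesaro y := fun n => by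
  unfold cesaro
  gcongr with k
  exact h k

lemma abs_cesaro_le {x : ℕ → ℝ} {M : ℝ} (hx : ∀ k, |x k| ≤ M) (n : ℕ) :
    |cesaro x n| ≤ M := by
  rcases Nat.eq_zero_or_pos n with rfl | hn
  · simpa [cesaro] using (abs_nonneg _).trans (hx 0)
  have hn' : (0 : ℝ) < n := by exact_mod_cast hn
  rw [cesaro, abs_div, Nat.abs_cast, div_le_iff₀ hn']
  calc |∑ k ∈ Finset.range n, x k| ≤ ∑ k ∈ Finset.range n, |x k| :=
        Finset.abs_sum_le_sum_abs _ _
    _ ≤ ∑ _k ∈ Finset.range n, M := Finset.sum_le_sum fun k _ => hx k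
    _ = M * n := by simp [mul_comm]

lemma abs_cesaro_sub_le {x : ℕ → ℝ} {l M ε : ℝ} {E : Set ℕ} (hM : ∀ k, |x k - l| ≤ M)
    (hε : 0 ≤ ε) (hE : ∀ k ∉ E, |x k - l| ≤ ε) {n : ℕ} (hn : 0 < n) :
    |cesaro x n - l| ≤ M * densSeq E n + ε := by
  classical
  have hn' : (0 : ℝ) < n := by exact_mod_cast hn
  set A := (Finset.range n).filter (· ∈ E)
  set B := (Finset.range n).filter (· ∉ E)
  have hB : (B.card : ℝ) ≤ n := by
    exact_mod_cast (Finset.card_filter_le _ _).trans (Finset.card_range n).le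
  have hsum : ∑ k ∈ Finset.range n, |x k - l| ≤ M * A.card + ε * n :=
    calc ∑ k ∈ Finset.range n, |x k - l|
        = ∑ k ∈ A, |x k - l| + ∑ k ∈ B, |x k - l| :=
          (Finset.sum_filter_add_sum_filter_not _ _ _).symm
      _ ≤ ∑ _k ∈ A, M + ∑ _k ∈ B, ε := by
          gcongr with k hk k hk
          · exact hM k
          · exact hE k (Finset.mem_filter.1 hk).2
      _ ≤ M * A.card + ε * n := by
          simp only [Finset.sum_const, nsmul_eq_mul, mul_comm _ M, mul_comm _ ε]
          gcongr
  have hmean : cesaro x n - l = (∑ k ∈ Finset.range n, (x k - l)) / n := by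
    rw [cesaro, Finset.sum_sub_distrib]
    field_simp
    simp
  rw [hmean, abs_div, Nat.abs_cast, div_le_iff₀ hn', densSeq]
  calc |∑ k ∈ Finset.range n, (x k - l)| ≤ ∑ k ∈ Finset.range n, |x k - l| :=
        Finset.abs_sum_le_sum_abs _ _
    _ ≤ M * A.card + ε * n := hsum
    _ = (M * (A.card / n) + ε) * n := by field_simp

theorem tendsto_cesaro_of_statTendsto {x : ℕ → ℝ} {l M : ℝ} (hx : ∀ k, |x k| ≤ M)
    (h : StatTendsto x l) : Tendsto (cesaro x) atTop (𝓝 l) := by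
  rw [Metric.tendsto_atTop]
  intro ε hε
  have hM : ∀ k, |x k - l| ≤ M + |l| := fun k => (abs_sub _ _).trans (by linarith [hx k])
  have hsmall : ∀ᶠ n in atTop, (M + |l|) * densSeq {k | |x k - l| > ε / 2} n < ε / 2 := by
    have := (h (ε / 2) (by positivity)).const_mul (M + |l|)
    rw [mul_zero] at this
    exact this.eventually_lt_const (by positivity)
  obtain ⟨N, hN⟩ := (hsmall.and (eventually_gt_atTop 0)).exists_forall_of_atTop
  refine ⟨N, fun n hn => ?_⟩
  have hest := abs_cesaro_sub_le hM (by positivity) (E := {k | |x k - l| > ε / 2})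
    (fun k hk => not_lt.1 hk) (hN n hn).2
  rw [Real.dist_eq]
  linarith [(hN n hn).1]

lemma tendsto_cesaro_sub_shift {x : ℕ → ℝ} {M : ℝ} (hx : ∀ k, |x k| ≤ M) :
    Tendsto (cesaro fun k => x k - x (k + 1)) atTop (𝓝 0) := by
  refine squeeze_zero_norm (fun n => ?_) (tendsto_const_div_atTop_nhds_zero_nat (2 * M))
  rw [cesaro, Finset.sum_range_sub', Real.norm_eq_abs, abs_div, Nat.abs_cast]
  gcongr
  linarith [abs_sub (x 0) (x n), hx 0, hx n]

section CesaroLimsup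

lemma abs_apply_le_norm (x : Linf) (k : ℕ) : |x k| ≤ ‖x‖ :=
  lp.norm_apply_le_norm ENNReal.top_ne_zero x k

lemma abs_cesaro_le_norm (x : Linf) (n : ℕ) : |cesaro x n| ≤ ‖x‖ :=
  abs_cesaro_le (abs_apply_le_norm x) n

lemma isBoundedUnder_le_cesaro (x : Linf) : IsBoundedUnder (· ≤ ·) atTop (cesaro x) :=
  isBoundedUnder_of ⟨‖x‖, fun n => (abs_le.1 (abs_cesaro_le_norm x n)).2⟩

lemma isCoboundedUnder_le_cesaro (x : Linf) : IsCoboundedUnder (· ≤ ·) atTop (cesaro x) :=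
  isCoboundedUnder_le_of_le atTop fun n => (abs_le.1 (abs_cesaro_le_norm x n)).1

noncomputable def cesaroLimsup (x : Linf) : ℝ := limsup (cesaro x) atTop

lemma cesaroLimsup_smul {c : ℝ} (hc : 0 < c) (x : Linf) :
    cesaroLimsup (c • x) = c * cesaroLimsup x := by
  rw [cesaroLimsup, cesaroLimsup, lp.coeFn_smul, cesaro_smul]
  exact ((monotone_mul_left_of_nonneg hc.le).map_limsup_of_continuousAt _
    (continuous_const_mul c).continuousAt (isBoundedUnder_le_cesaro x)
    (isCoboundedUnder_le_cesaro x)).symm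

lemma cesaroLimsup_add (x y : Linf) :
    cesaroLimsup (x + y) ≤ cesaroLimsup x + cesaroLimsup y := by
  rw [cesaroLimsup, lp.coeFn_add, cesaro_add]
  exact limsup_add_le (isBoundedUnder_of ⟨-‖x‖, fun n => (abs_le.1 (abs_cesaro_le_norm x n)).1⟩)
    (isBoundedUnder_le_cesaro x) (isCoboundedUnder_le_cesaro y) (isBoundedUnder_le_cesaro y)

lemma cesaroLimsup_le_norm (x : Linf) : cesaroLimsup x ≤ ‖x‖ :=
  limsup_le_of_le (isCoboundedUnder_le_cesaro x)
    (Eventually.of_forall fun n => (abs_le.1 (abs_cesaro_le_norm x n)).2)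

lemma cesaroLimsup_le_of_le_of_tendsto {x : Linf} {v : ℕ → ℝ} {l : ℝ} (hxv : cesaro x ≤ v)
    (hv : Tendsto v atTop (𝓝 l)) : cesaroLimsup x ≤ l :=
  (limsup_le_limsup (Eventually.of_forall hxv) (isCoboundedUnder_le_cesaro x)
    hv.isBoundedUnder_le).trans_eq hv.limsup_eq

end CesaroLimsup

theorem exists_linearMap_le_sublinear {E : Type*} [AddCommGroup E] [Module ℝ E] (N : E → ℝ)
    (N_hom : ∀ c : ℝ, 0 < c → ∀ x, N (c • x) = c * N x) (N_add : ∀ x y, N (x + y) ≤ N x + N y) :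
    ∃ g : E →ₗ[ℝ] ℝ, ∀ x, g x ≤ N x := by
  have N_zero : N 0 = 0 := by
    have := N_hom 2 two_pos 0
    rw [smul_zero] at this
    linarith
  obtain ⟨g, -, hg⟩ := exists_extension_of_le_sublinear ((0 : E →ₗ[ℝ] ℝ).toPMap ⊥) N N_hom N_add
    (fun ⟨x, hx⟩ => by simp [(Submodule.mem_bot ℝ).1 hx, N_zero])
  exact ⟨g, hg⟩

section DominatedFunctional

variable {g : Linf →ₗ[ℝ] ℝ} (hg : ∀ x, g x ≤ cesaroLimsup x)
include hg

lemma abs_apply_le_norm_of_le_cesaroLimsup (x : Linf) : |g x| ≤ ‖x‖ := by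
  have hneg := (hg (-x)).trans (cesaroLimsup_le_norm (-x))
  rw [map_neg, norm_neg] at hneg
  exact abs_le.2 ⟨by linarith, (hg x).trans (cesaroLimsup_le_norm x)⟩

lemma apply_eq_of_tendsto_cesaro {x : Linf} {l : ℝ} (h : Tendsto (cesaro x) atTop (𝓝 l)) :
    g x = l := by
  have hle : g x ≤ l := (hg x).trans_eq h.limsup_eq
  have hge : g (-x) ≤ -l := by
    refine (hg (-x)).trans_eq ?_
    rw [cesaroLimsup, lp.coeFn_neg, cesaro_neg]
    exact h.neg.limsup_eq
  rw [map_neg] at hge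
  linarith

lemma apply_eq_of_statTendsto {x : Linf} {l : ℝ} (h : StatTendsto (fun n => x n) l) : g x = l :=
  apply_eq_of_tendsto_cesaro hg (tendsto_cesaro_of_statTendsto (abs_apply_le_norm x) h)

lemma apply_nonneg_of_hasDensity {s : Linf} (hs : HasDensity {n | ¬ 0 ≤ s n} 0) : 0 ≤ g s := by
  have hsupp : HasDensity (Function.support fun k => max (-s k) 0) 0 := by
    refine hasDensity_zero_of_subset ?_ hs
    intro k hk hsk
    exact hk (max_eq_right (by simpa using hsk))
  have hbound (k : ℕ) : |max (-s k) 0| ≤ ‖s‖ := by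
    have h := abs_max_sub_max_le_abs (-s k) 0 0
    simp only [max_self, sub_zero, abs_neg] at h
    exact h.trans (abs_apply_le_norm s k)
  have htend := tendsto_cesaro_of_statTendsto hbound
    (statTendsto_zero_of_hasDensity_support hsupp)
  have hneg := (hg (-s)).trans <| cesaroLimsup_le_of_le_of_tendsto
    (cesaro_mono fun k => le_max_left _ _) htend
  rw [map_neg] at hneg
  linarith

lemma apply_eq_apply_of_hasDensity_shift (x y : Linf)
    (hxy : HasDensity {k | y k ≠ x (k + 1)} 0) : g x = g y := by
  have hsupp : HasDensity (Function.support fun k => x (k + 1) - y k) 0 := by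
    refine hasDensity_zero_of_subset ?_ hxy
    intro k hk hyx
    simp [hyx] at hk
  have htend : Tendsto (cesaro ⇑(x - y)) atTop (𝓝 0) := by
    have hsplit : ⇑(x - y) = (fun k => x k - x (k + 1)) + fun k => x (k + 1) - y k := by
      funext k
      simp
    rw [hsplit, cesaro_add, ← add_zero (0 : ℝ)]
    exact (tendsto_cesaro_sub_shift (abs_apply_le_norm x)).add
      (tendsto_cesaro_of_statTendsto (M := ‖x‖ + ‖y‖)
        (fun k => (abs_sub _ _).trans (add_le_add (abs_apply_le_norm x _) (abs_apply_le_norm y k)))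
        (statTendsto_zero_of_hasDensity_support hsupp))
  have hdiff := apply_eq_of_tendsto_cesaro hg htend
  rwa [map_sub, sub_eq_zero] at hdiff

end DominatedFunctional

theorem exists_banach_statistical_limit :
    ∃ F : Linf →L[ℝ] ℝ,
      ‖F‖ = 1 ∧
      (∀ (x : Linf) (l : ℝ), StatTendsto (fun n => x n) l → F x = l) ∧
      (∀ s : Linf, HasDensity {n | ¬ 0 ≤ s n} 0 → 0 ≤ F s) ∧
      (∀ T : Linf → Linf,
        (∀ x : Linf, HasDensity {k | T x k ≠ x (k + 1)} 0) →
          ∀ x : Linf, F x = F (T x)) := by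
  obtain ⟨g, hg⟩ := exists_linearMap_le_sublinear cesaroLimsup
    (fun _ hc => cesaroLimsup_smul hc) cesaroLimsup_add
  let F : Linf →L[ℝ] ℝ := g.mkContinuous 1 fun x => by
    simpa using abs_apply_le_norm_of_le_cesaroLimsup hg x
  have hF1 : F 1 = 1 := apply_eq_of_statTendsto hg <| by
    simpa [lp.infty_coeFn_one] using statTendsto_const 1
  refine ⟨F, le_antisymm (g.mkContinuous_norm_le zero_le_one _) ?_,
    fun x l => apply_eq_of_statTendsto hg, fun s => apply_nonneg_of_hasDensity hg,
    fun T hT x => apply_eq_apply_of_hasDensity_shift hg x (T x) (hT x)⟩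
  simpa [hF1] using F.le_opNorm 1
end

section
/- Every Banach statistical limit functional on l∞ is a Banach limit functional, i.e., it has norm 1, extends the ordinary limit functional on convergent sequences, is nonnegative on (eventually) nonnegative sequences, and is shift-invariant. -/
open Filter

lemma finite_hasDensity_zero (P : Set ℕ) (hP : P.Finite) : HasDensity P 0 := by
  classical
  unfold HasDensity densSeq
  apply squeeze_zero (fun n => by positivity)
    (g := fun n : ℕ => (hP.toFinset.card : ℝ) / n)
  · intro n
    apply div_le_div_of_nonneg_right ?_ (by positivity)
    · exact_mod_cast Finset.card_le_card (fun k hk => by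
        simpa using (Finset.mem_filter.mp hk).2)
  · exact tendsto_const_div_atTop_nhds_zero_nat _

lemma tendsto_statTendsto {x : ℕ → ℝ} {l : ℝ}
    (h : Tendsto x atTop (nhds l)) : StatTendsto x l := by
  intro ε hε
  apply finite_hasDensity_zero
  have : ∀ᶠ n in atTop, |x n - l| ≤ ε := by
    have := Metric.tendsto_atTop.mp h ε hε
    obtain ⟨N, hN⟩ := this
    exact eventually_atTop.mpr ⟨N, fun n hn => le_of_lt (by simpa [Real.dist_eq] using hN n hn)⟩
  obtain ⟨N, hN⟩ := eventually_atTop.mp this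
  apply Set.Finite.subset (Set.finite_Iio N)
  intro n hn
  simp only [Set.mem_setOf_eq] at hn
  by_contra hc
  exact absurd (hN n (not_lt.mp (by simpa using hc))) (not_le.mpr hn)

theorem bsl_is_banach_limit (F : Linf →L[ℝ] ℝ) (hF : IsBSL F) :
    ‖F‖ = 1 ∧
    (∀ (x : Linf) (l : ℝ), Tendsto (fun n => x n) atTop (nhds l) → F x = l) ∧
    (∀ s : Linf, (∀ n, 0 ≤ s n) → 0 ≤ F s) ∧
    (∀ x y : Linf, (∀ k, y k = x (k + 1)) → F x = F y) := by
  obtain ⟨h1, h2, h3, h4⟩ := hF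
  refine ⟨h1, fun x l hx => h2 x l (tendsto_statTendsto hx), fun s hs => ?_, ?_⟩
  · apply h3
    have : {n | ¬ 0 ≤ s n} = ∅ := by
      ext n; simp [hs n]
    rw [this]
    exact finite_hasDensity_zero _ (Set.finite_empty)
  · intro x y hxy
    have hmem : ∀ z : Linf, Memℓp (fun k => z (k + 1)) ⊤ := by
      intro z
      apply memℓp_infty
      refine ⟨‖z‖, ?_⟩
      rintro r ⟨k, rfl⟩
      exact lp.norm_apply_le_norm (by norm_num) z (k + 1)
    set T : Linf → Linf := fun z => ⟨fun k => z (k + 1), hmem z⟩ with hT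
    have hdens : ∀ z : Linf, HasDensity {k | T z k ≠ z (k + 1)} 0 := by
      intro z
      have : {k | T z k ≠ z (k + 1)} = ∅ := by
        ext k; simp [hT]
      rw [this]
      exact finite_hasDensity_zero _ (Set.finite_empty)
    have := h4 T hdens x
    rw [this]
    congr 1
    apply lp.ext
    funext k
    exact (hxy k).symm
end
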